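/- Let M ⊆ E be a smooth embedded submanifold and let g: E → ℝ be locally Lipschitz continuous on an open superset of M. Then the projectional limiting subdifferential is nonempty at every point of M, i.e. ∂_M g(x̄) ≠ ∅ for all x̄ ∈ M. -/

import Mathlib

/-
Fix `z ∈ M`. Near `z` the set `M` is closed, so `C := M ∩ closedBall z r` is compact and the
penalized function `g + c‖· - z‖²` attains its minimum on `C` at some `x`. Comparing with the
value at `z` and using the Lipschitz constant `K` gives `c‖x - z‖ ≤ K`; so for large `c` the
minimizer lies in the open ball, where the minimality is local on `M` and yields the Fréchet
subgradient `2c(z - x)` of `g + δ_M` at `x`, of norm at most `2K`. Letting `c → ∞`, `x → z`, and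
a convergent subsequence of these bounded subgradients gives an element of `∂(g + δ_M)(z)`,
whose projection lies in `∂_M g(z)`.
-/

open Set Filter Topology

noncomputable section

variable {E : Type*} [NormedAddCommGroup E] [InnerProductSpace ℝ E] [FiniteDimensional ℝ E]

open Classical in
/-- The indicator function of a set `M` (`0` on `M`, `+∞` elsewhere), with values in `EReal`. -/
def indicatorFun (M : Set E) (x : E) : EReal := if x ∈ M then 0 else ⊤

/-- The Fréchet (regular) subdifferential of an extended-real-valued function `g` at `x`. -/
def frechetSubdiff (g : E → EReal) (x : E) : Set E :=
  {v | ∀ ε : ℝ, 0 < ε →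
    ∀ᶠ y in 𝓝 x, g x + (((inner ℝ v (y - x) : ℝ) - ε * ‖y - x‖ : ℝ) : EReal) ≤ g y}

/-- The limiting (Mordukhovich) subdifferential of `g` at `x`. -/
def limitingSubdiff (g : E → EReal) (x : E) : Set E :=
  {v | ∃ xs vs : ℕ → E,
    Tendsto xs atTop (𝓝 x) ∧
    Tendsto (fun n => g (xs n)) atTop (𝓝 (g x)) ∧
    (∀ n, vs n ∈ frechetSubdiff g (xs n)) ∧
    Tendsto vs atTop (𝓝 v)}

/-- The projectional limiting subdifferential of `g` at `x` relative to `M`: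
the orthogonal projection onto the tangent space `T x` of the limiting
subdifferential of `g + δ_M` at `x`. -/
def projSubdiff (g : E → ℝ) (M : Set E) (T : E → Submodule ℝ E) (x : E) : Set E :=
  (fun v => ((Submodule.orthogonalProjectionOnto (T x) v : T x) : E)) ''
    limitingSubdiff (fun y => (g y : EReal) + indicatorFun M y) x

/-- `M ⊆ E` is a smooth embedded submanifold with tangent spaces `T x`: around each
point of `M` there is a `C¹` local defining function with surjective derivative at
that point, and on `M` the tangent space is the kernel of the derivative. -/
def IsSubmanifold (M : Set E) (T : E → Submodule ℝ E) : Prop :=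
  ∀ x ∈ M, ∃ (m : ℕ) (U : Set E) (F : E → (Fin m → ℝ)),
    IsOpen U ∧ x ∈ U ∧ ContDiffOn ℝ 1 F U ∧
    Function.Surjective ⇑(fderiv ℝ F x) ∧
    M ∩ U = {y ∈ U | F y = 0} ∧
    ∀ y ∈ M ∩ U, T y = LinearMap.ker (fderiv ℝ F y : E →ₗ[ℝ] (Fin m → ℝ))

/-- `g` is locally Lipschitz continuous on `O`. -/
def LocLipschitzOn (g : E → ℝ) (O : Set E) : Prop :=
  ∀ x ∈ O, ∃ s ∈ 𝓝 x, ∃ K : NNReal, LipschitzOnWith K g s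

theorem IsLocallyClosed.exists_isClosed_inter_closedBall {X : Type*} [PseudoMetricSpace X]
    {M s : Set X} (hM : IsLocallyClosed M) {z : X} (hz : z ∈ M) (hs : s ∈ 𝓝 z) :
    ∃ r > 0, Metric.closedBall z r ⊆ s ∧ IsClosed (M ∩ Metric.closedBall z r) := by
  have hlocal := ((isLocallyClosed_tfae M).out 0 3).mp hM
  obtain ⟨U, hzU, hU, hUM⟩ := hlocal z hz
  obtain ⟨r, hr, hball⟩ :=
    Metric.nhds_basis_closedBall.mem_iff.mp (inter_mem (hU.mem_nhds hzU) hs)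
  refine ⟨r, hr, fun y hy => (hball hy).2, ?_⟩
  have hclosure : M ∩ Metric.closedBall z r = closure M ∩ Metric.closedBall z r :=
    Subset.antisymm (inter_subset_inter_left _ subset_closure) fun y ⟨hyM, hyB⟩ =>
      ⟨hUM ⟨(hball hyB).1, hyM⟩, hyB⟩
  rw [hclosure]
  exact isClosed_closure.inter Metric.isClosed_closedBall

theorem LipschitzOnWith.mul_norm_sub_le_of_add_mul_sq_le {F : Type*} [SeminormedAddCommGroup F]
    {g : F → ℝ} {s : Set F} {K : NNReal} (hK : LipschitzOnWith K g s) {x z : F} (hx : x ∈ s)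
    (hz : z ∈ s) {c : ℝ} (h : g x + c * ‖x - z‖ ^ 2 ≤ g z) : c * ‖x - z‖ ≤ K := by
  have hlip : g z - g x ≤ K * ‖x - z‖ := by
    have := hK.dist_le_mul z hz x hx
    rw [Real.dist_eq, dist_comm, dist_eq_norm] at this
    exact (le_abs_self _).trans this
  rcases (norm_nonneg (x - z)).eq_or_lt with h0 | hpos
  · rw [← h0, mul_zero]
    exact K.coe_nonneg
  · nlinarith

section

variable {V : Type*} [NormedAddCommGroup V] [InnerProductSpace ℝ V]

theorem IsSubmanifold.isLocallyClosed {M : Set V} {T : V → Submodule ℝ V}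
    (hM : IsSubmanifold M T) : IsLocallyClosed M := by
  refine ((isLocallyClosed_tfae M).out 0 2).mpr fun x hx => ?_
  obtain ⟨m, U, F, hU, hxU, hF, -, hMU, -⟩ := hM x hx
  refine ⟨U, hU.mem_nhds hxU, ?_⟩
  have hzero : ((↑) ⁻¹' M : Set U) = {y : U | F y = 0} := by
    ext y
    have hy : (y : V) ∈ M ∩ U ↔ (y : V) ∈ {y ∈ U | F y = 0} := by rw [hMU]
    simpa [y.2] using hy
  rw [hzero]
  exact isClosed_eq hF.continuousOn.domRestrict continuous_const

theorem smul_sub_mem_frechetSubdiff_of_isLocalMinOn {g : V → ℝ} {M : Set V} {x z : V} {c : ℝ}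
    (hx : x ∈ M) (hmin : IsLocalMinOn (fun y => g y + c * ‖y - z‖ ^ 2) M x) :
    (2 * c) • (z - x) ∈ frechetSubdiff (fun y => (g y : EReal) + indicatorFun M y) x := by
  intro ε hε
  have hsmall : ∀ᶠ y in 𝓝 x, c * ‖y - x‖ < ε := by
    have hcont : Continuous fun y : V => c * ‖y - x‖ := by fun_prop
    exact hcont.tendsto x |>.eventually (gt_mem_nhds (by simpa using hε))
  filter_upwards [eventually_nhdsWithin_iff.mp hmin, hsmall] with y hyx hy
  by_cases hyM : y ∈ M
  · simp only [indicatorFun, if_pos hyM, if_pos hx, add_zero]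
    rw [← EReal.coe_add, EReal.coe_le_coe_iff]
    have hexpand : ‖y - z‖ ^ 2 = ‖y - x‖ ^ 2 + 2 * inner ℝ (y - x) (x - z) + ‖x - z‖ ^ 2 := by
      rw [← norm_add_sq_real, sub_add_sub_cancel]
    have hinner : inner ℝ ((2 * c) • (z - x)) (y - x) = -(2 * c * inner ℝ (y - x) (x - z)) := by
      rw [real_inner_smul_left, ← neg_sub x z, inner_neg_left, real_inner_comm]
      ring
    have hquad : c * ‖y - x‖ ^ 2 ≤ ε * ‖y - x‖ := by nlinarith [norm_nonneg (y - x)]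
    have hle := hyx hyM
    rw [hexpand] at hle
    rw [hinner]
    linarith
  · simp [indicatorFun, if_neg hyM]

variable [ProperSpace V]

theorem limitingSubdiff_nonempty_of_bounded {G : V → EReal} {x : V} {xs vs : ℕ → V}
    (hxs : Tendsto xs atTop (𝓝 x)) (hG : Tendsto (G ∘ xs) atTop (𝓝 (G x)))
    (hvs : ∀ n, vs n ∈ frechetSubdiff G (xs n)) {B : ℝ} (hB : ∀ n, ‖vs n‖ ≤ B) :
    (limitingSubdiff G x).Nonempty := by
  obtain ⟨w, -, φ, hφ, hw⟩ := tendsto_subseq_of_bounded (Metric.isBounded_closedBall (x := 0))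
    fun n => (mem_closedBall_zero_iff.mpr (hB n) : vs n ∈ Metric.closedBall (0 : V) B)
  exact ⟨w, xs ∘ φ, vs ∘ φ, hxs.comp hφ.tendsto_atTop, hG.comp hφ.tendsto_atTop,
    fun n => hvs (φ n), hw⟩

theorem exists_frechetSubdiff_add_indicatorFun_near {M : Set V} {g : V → ℝ} {z : V} {r : ℝ}
    {K : NNReal} (hC : IsClosed (M ∩ Metric.closedBall z r)) (hz : z ∈ M)
    (hK : LipschitzOnWith K g (Metric.closedBall z r)) {t : ℝ} (ht : 0 < t) (htr : t ≤ r) :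
    ∃ x ∈ M, ‖x - z‖ < t ∧
      ∃ v ∈ frechetSubdiff (fun y => (g y : EReal) + indicatorFun M y) x, ‖v‖ ≤ 2 * K := by
  set c := ((K : ℝ) + 1) / t
  have hc : 0 < c := by positivity
  have hzC : z ∈ M ∩ Metric.closedBall z r := ⟨hz, Metric.mem_closedBall_self (ht.le.trans htr)⟩
  have hcont : ContinuousOn (fun y => g y + c * ‖y - z‖ ^ 2) (M ∩ Metric.closedBall z r) :=
    (hK.continuousOn.mono inter_subset_right).add (by fun_prop)
  obtain ⟨x, hxC, hmin⟩ := ((isCompact_closedBall z r).of_isClosed_subset hC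
    inter_subset_right).exists_isMinOn ⟨z, hzC⟩ hcont
  have hbound : c * ‖x - z‖ ≤ K :=
    hK.mul_norm_sub_le_of_add_mul_sq_le hxC.2 hzC.2 (by simpa using hmin hzC)
  have hxt : ‖x - z‖ < t := by
    have hct : c * t = K + 1 := div_mul_cancel₀ _ ht.ne'
    exact lt_of_mul_lt_mul_left (by linarith) hc.le
  have hlocal : IsLocalMinOn (fun y => g y + c * ‖y - z‖ ^ 2) M x := by
    have hball : Metric.closedBall z r ∈ 𝓝 x :=
      Metric.closedBall_mem_nhds_of_mem (mem_ball_iff_norm.mpr (hxt.trans_le htr))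
    filter_upwards [inter_mem_nhdsWithin M hball] with y hy using hmin hy
  refine ⟨x, hxC.1, hxt, _, smul_sub_mem_frechetSubdiff_of_isLocalMinOn hxC.1 hlocal, ?_⟩
  rw [norm_smul, Real.norm_of_nonneg (by positivity), norm_sub_rev]
  linarith

theorem limitingSubdiff_add_indicatorFun_nonempty {M : Set V} (hM : IsLocallyClosed M) {z : V}
    (hz : z ∈ M) {g : V → ℝ} {s : Set V} (hs : s ∈ 𝓝 z) {K : NNReal}
    (hK : LipschitzOnWith K g s) :
    (limitingSubdiff (fun y => (g y : EReal) + indicatorFun M y) z).Nonempty := by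
  obtain ⟨r, hr, hrs, hC⟩ := hM.exists_isClosed_inter_closedBall hz hs
  have ht (n : ℕ) : 0 < r / (n + 1) := by positivity
  have htr (n : ℕ) : r / (n + 1) ≤ r := div_le_self hr.le (by linarith [n.cast_nonneg (α := ℝ)])
  choose xs hxsM hxs vs hvs hvsB using fun n =>
    exists_frechetSubdiff_add_indicatorFun_near hC hz (hK.mono hrs) (ht n) (htr n)
  have hxz : Tendsto xs atTop (𝓝 z) := by
    rw [tendsto_iff_norm_sub_tendsto_zero]
    refine squeeze_zero (fun n => norm_nonneg _) (fun n => (hxs n).le) ?_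
    simpa only [mul_one_div, mul_zero] using tendsto_one_div_add_atTop_nhds_zero_nat.const_mul r
  have hG : Tendsto (fun n => (g (xs n) : EReal) + indicatorFun M (xs n)) atTop
      (𝓝 ((g z : EReal) + indicatorFun M z)) := by
    simp only [indicatorFun, if_pos hz, if_pos (hxsM _), add_zero]
    exact (continuous_coe_real_ereal.tendsto _).comp
      ((hK.continuousOn.continuousAt hs).tendsto.comp hxz)
  exact limitingSubdiff_nonempty_of_bounded hxz hG hvs hvsB

end

theorem stmt1_general (M : Set E) (T : E → Submodule ℝ E) (hM : IsSubmanifold M T)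
    (g : E → ℝ) (O : Set E) (hMO : M ⊆ O)
    (hlip : LocLipschitzOn g O) :
    ∀ z ∈ M, (projSubdiff g M T z).Nonempty := by
  intro z hz
  obtain ⟨s, hs, K, hK⟩ := hlip z (hMO hz)
  exact (limitingSubdiff_add_indicatorFun_nonempty hM.isLocallyClosed hz hs hK).image _

/-- The projectional limiting subdifferential is nonempty at every point of `M`. -/
theorem stmt1 (M : Set E) (T : E → Submodule ℝ E) (hM : IsSubmanifold M T)
    (g : E → ℝ) (O : Set E) (hO : IsOpen O) (hMO : M ⊆ O)
    (hlip : LocLipschitzOn g O) :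
    ∀ z ∈ M, (projSubdiff g M T z).Nonempty :=
  stmt1_general M T hM g O hMO hlip

end
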